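/- Basic properties of landscape functions. Let m > s ≥ 1 and let q := q_W be the landscape function associated with a matrix W ∈ ℂ^{m×s} with orthonormal columns. Then: 0 ≤ q(t) ≤ 1 for all t ∈ 𝕋; q is not identically zero; q is a trigonometric polynomial of degree at most m−1; q admits a polynomial sum-of-squares representation q = |q_1|² + ⋯ + |q_{m−s}|² for some trigonometric polynomials q_1,…,q_{m−s}; and for every integer ℓ ≥ 0, ‖q^{(ℓ)}‖_{L^∞(𝕋)} ≤ m^ℓ. -/

import Mathlib

open scoped Real BigOperators Matrix
open Matrix

noncomputable section

/-- The steering vector `φ(t) = m^{-1/2} (e^{ikt})_{k ∈ I(m)}`,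
where `I(m) = {-(m-1)/2, …, (m-1)/2}` (realized by `k ↦ k - (m-1)/2` for `k : Fin m`). -/
def steer (m : ℕ) (t : ℝ) : Fin m → ℂ :=
  fun k => (Real.sqrt m : ℂ)⁻¹ *
    Complex.exp (Complex.I * (((((k : ℕ) : ℝ) - ((m : ℝ) - 1) / 2) * t : ℝ) : ℂ))

/-- The landscape function `q_W(t) = 1 - ‖W^* φ(t)‖₂²`. -/
def landscape {m s : ℕ} (W : Matrix (Fin m) (Fin s) ℂ) (t : ℝ) : ℝ :=
  1 - ∑ j, ‖(Wᴴ *ᵥ steer m t) j‖ ^ 2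

/-- `f` is a trigonometric polynomial of degree at most `n`. -/
def IsTrigPoly (n : ℕ) (f : ℝ → ℂ) : Prop :=
  ∃ c : ℤ → ℂ, ∀ t : ℝ,
    f t = ∑ k ∈ Finset.Icc (-(n : ℤ)) (n : ℤ),
      c k * Complex.exp (Complex.I * (k : ℂ) * (t : ℂ))

namespace LandscapeAux

open Complex Module

/-- helper: any exponential sum with integer frequencies in `[-N,N]` is a trig poly. -/
lemma isTrigPoly_expsum {ι : Type*} [Fintype ι] [DecidableEq ι] (N : ℕ) (a : ι → ℂ) (d : ι → ℤ)
    (hd : ∀ i, d i ∈ Finset.Icc (-(N : ℤ)) (N : ℤ)) :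
    IsTrigPoly N (fun t => ∑ i, a i * Complex.exp (Complex.I * (d i : ℂ) * (t : ℂ))) := by
  refine ⟨fun e => ∑ i, if d i = e then a i else 0, fun t => ?_⟩
  simp_rw [Finset.sum_mul]
  rw [Finset.sum_comm]
  refine Finset.sum_congr rfl fun i _ => ?_
  have : ∀ k ∈ Finset.Icc (-(N:ℤ)) (N:ℤ),
      (if d i = k then a i else 0) * Complex.exp (Complex.I * (k : ℂ) * (t : ℂ)) =
      (if k = d i then a i * Complex.exp (Complex.I * (d i : ℂ) * (t : ℂ)) else 0) := by
    intro k _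
    rcases eq_or_ne (d i) k with h | h
    · simp [h]
    · simp [h, Ne.symm h]
  rw [Finset.sum_congr rfl this, Finset.sum_ite_eq' _ (d i), if_pos (hd i)]

lemma conj_exp_I_mul (x : ℝ) :
    (starRingEnd ℂ) (Complex.exp (Complex.I * (x:ℂ))) = Complex.exp (-(Complex.I * (x:ℂ))) := by
  rw [← Complex.exp_conj]; congr 1; simp

lemma steer_mul_conj {m : ℕ} (t : ℝ) (k k' : Fin m) :
    steer m t k * (starRingEnd ℂ) (steer m t k') =
    (m : ℂ)⁻¹ * Complex.exp (Complex.I * (((k : ℤ) - (k' : ℤ) : ℤ) : ℂ) * (t : ℂ)) := by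
  unfold steer
  rw [_root_.map_mul, conj_exp_I_mul]
  have h1 : (starRingEnd ℂ) ((Real.sqrt m : ℂ))⁻¹ = ((Real.sqrt m : ℂ))⁻¹ := by
    simp [← Complex.ofReal_inv]
  rw [h1]
  have h2 : ((Real.sqrt m : ℂ))⁻¹ * ((Real.sqrt m : ℂ))⁻¹ = (m:ℂ)⁻¹ := by
    rw [← mul_inv, ← Complex.ofReal_mul, Real.mul_self_sqrt (Nat.cast_nonneg m),
      Complex.ofReal_natCast]
  have h3 : Complex.exp (Complex.I * (((((k : ℕ) : ℝ) - ((m : ℝ) - 1) / 2) * t : ℝ) : ℂ)) *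
      Complex.exp (-(Complex.I * (((((k' : ℕ) : ℝ) - ((m : ℝ) - 1) / 2) * t : ℝ) : ℂ))) =
      Complex.exp (Complex.I * (((k : ℤ) - (k' : ℤ) : ℤ) : ℂ) * (t : ℂ)) := by
    rw [← Complex.exp_add]; congr 1; push_cast; ring
  calc ((Real.sqrt m : ℂ))⁻¹ * Complex.exp (Complex.I * (((((k : ℕ) : ℝ) - ((m : ℝ) - 1) / 2) * t : ℝ) : ℂ)) *
      (((Real.sqrt m : ℂ))⁻¹ * Complex.exp (-(Complex.I * (((((k' : ℕ) : ℝ) - ((m : ℝ) - 1) / 2) * t : ℝ) : ℂ))))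
      = (((Real.sqrt m : ℂ))⁻¹ * ((Real.sqrt m : ℂ))⁻¹) * (Complex.exp (Complex.I * (((((k : ℕ) : ℝ) - ((m : ℝ) - 1) / 2) * t : ℝ) : ℂ)) *
        Complex.exp (-(Complex.I * (((((k' : ℕ) : ℝ) - ((m : ℝ) - 1) / 2) * t : ℝ) : ℂ)))) := by ring
    _ = _ := by rw [h2, h3]

def Cf {m s : ℕ} (W : Matrix (Fin m) (Fin s) ℂ) : Option (Fin s × Fin m × Fin m) → ℂ
  | none => 1
  | some (j, k, k') => -(m : ℂ)⁻¹ * ((starRingEnd ℂ) (W k j) * W k' j)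

def Df {m s : ℕ} : Option (Fin s × Fin m × Fin m) → ℤ
  | none => 0
  | some (_, k, k') => (k : ℤ) - (k' : ℤ)

lemma mulVec_expand {m s : ℕ} (W : Matrix (Fin m) (Fin s) ℂ) (t : ℝ) (j : Fin s) :
    (Wᴴ *ᵥ steer m t) j = ∑ k, (starRingEnd ℂ) (W k j) * steer m t k := by
  simp [Matrix.mulVec, dotProduct, Matrix.conjTranspose_apply]

lemma normsq_as_mul (z : ℂ) : ((‖z‖ ^ 2 : ℝ) : ℂ) = z * (starRingEnd ℂ) z := by
  rw [Complex.mul_conj, Complex.sq_norm]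

lemma master {m s : ℕ} (W : Matrix (Fin m) (Fin s) ℂ) (t : ℝ) :
    ((landscape W t : ℝ) : ℂ) =
    ∑ p : Option (Fin s × Fin m × Fin m),
      Cf W p * Complex.exp (Complex.I * ((Df (m := m) (s := s) p : ℤ) : ℂ) * (t : ℂ)) := by
  rw [Fintype.sum_option]
  have hnone : Cf W (none : Option (Fin s × Fin m × Fin m)) *
      Complex.exp (Complex.I * ((Df (m := m) (s := s) none : ℤ) : ℂ) * (t : ℂ)) = 1 := by
    simp [Cf, Df]
  rw [hnone, landscape]
  rw [Complex.ofReal_sub, Complex.ofReal_one, Complex.ofReal_sum]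
  rw [sub_eq_add_neg, add_comm (1:ℂ), add_comm (1:ℂ), add_left_inj, ← Finset.sum_neg_distrib]
  rw [Fintype.sum_prod_type]
  refine Finset.sum_congr rfl fun j _ => ?_
  rw [normsq_as_mul, mulVec_expand, map_sum, Finset.sum_mul_sum, ← Finset.sum_neg_distrib,
    Fintype.sum_prod_type]
  refine Finset.sum_congr rfl fun k _ => ?_
  rw [← Finset.sum_neg_distrib]
  refine Finset.sum_congr rfl fun k' _ => ?_
  rw [_root_.map_mul, Cf, Df]
  have : (starRingEnd ℂ) (W k j) * steer m t k * ((starRingEnd ℂ) ((starRingEnd ℂ) (W k' j)) * (starRingEnd ℂ) (steer m t k')) =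
      ((starRingEnd ℂ) (W k j) * W k' j) * (steer m t k * (starRingEnd ℂ) (steer m t k')) := by
    rw [Complex.conj_conj]; ring
  rw [this, steer_mul_conj]
  ring

def wcol {m s : ℕ} (W : Matrix (Fin m) (Fin s) ℂ) (j : Fin s) : EuclideanSpace ℂ (Fin m) :=
  WithLp.toLp 2 (fun k => W k j)

lemma orthonormal_wcol {m s : ℕ} (W : Matrix (Fin m) (Fin s) ℂ) (hW : Wᴴ * W = 1) :
    Orthonormal ℂ (wcol W) := by
  rw [orthonormal_iff_ite]
  intro i j
  have h := congrFun (congrFun hW i) j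
  simp only [Matrix.mul_apply, Matrix.conjTranspose_apply, Matrix.one_apply] at h
  rw [PiLp.inner_apply]
  simp only [RCLike.inner_apply', wcol]
  simpa using h

lemma inner_wcol {m s : ℕ} (W : Matrix (Fin m) (Fin s) ℂ) (u : EuclideanSpace ℂ (Fin m)) (j : Fin s) :
    (inner ℂ (wcol W j) u : ℂ) = ∑ k, (starRingEnd ℂ) (W k j) * u k := by
  rw [PiLp.inner_apply]; simp [RCLike.inner_apply', wcol, mul_comm]

lemma norm_sq_eucl {ι : Type} [Fintype ι] (u : EuclideanSpace ℂ ι) : ‖u‖ ^ 2 = ∑ k, ‖u k‖ ^ 2 := by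
  rw [EuclideanSpace.norm_eq, Real.sq_sqrt]
  positivity

lemma bessel_col {m s : ℕ} (W : Matrix (Fin m) (Fin s) ℂ) (hW : Wᴴ * W = 1)
    (u : EuclideanSpace ℂ (Fin m)) :
    ∑ j, ‖∑ k, (starRingEnd ℂ) (W k j) * u k‖ ^ 2 ≤ ∑ k, ‖u k‖ ^ 2 := by
  have h := Orthonormal.sum_inner_products_le (s := Finset.univ) u (orthonormal_wcol W hW)
  rw [norm_sq_eucl u] at h
  simpa [inner_wcol] using h

lemma norm_steer {m : ℕ} (hm : 0 < m) (t : ℝ) (k : Fin m) :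
    ‖steer m t k‖ = (Real.sqrt m)⁻¹ := by
  rw [steer, norm_mul]
  have h1 : ‖((Real.sqrt m : ℝ) : ℂ)⁻¹‖ = (Real.sqrt m)⁻¹ := by
    rw [norm_inv, Complex.norm_real, Real.norm_eq_abs, _root_.abs_of_nonneg (Real.sqrt_nonneg _)]
  have h2 : ‖Complex.exp (Complex.I * (((((k : ℕ) : ℝ) - ((m : ℝ) - 1) / 2) * t : ℝ) : ℂ))‖ = 1 := by
    rw [mul_comm, Complex.norm_exp_ofReal_mul_I]
  rw [h1, h2, mul_one]

lemma sum_norm_sq_steer {m : ℕ} (hm : 0 < m) (t : ℝ) :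
    ∑ k, ‖steer m t k‖ ^ 2 = 1 := by
  have : ∀ k : Fin m, ‖steer m t k‖ ^ 2 = (m : ℝ)⁻¹ := by
    intro k
    rw [norm_steer hm, inv_pow, Real.sq_sqrt (Nat.cast_nonneg m)]
  rw [Finset.sum_congr rfl fun k _ => this k, Finset.sum_const, Finset.card_univ,
    Fintype.card_fin, nsmul_eq_mul]
  field_simp

lemma hasDerivAt_expterm (c : ℂ) (d : ℤ) (t : ℝ) :
    HasDerivAt (fun t : ℝ => c * Complex.exp (Complex.I * (d : ℂ) * (t : ℂ)))
      (c * (Complex.I * (d : ℂ)) * Complex.exp (Complex.I * (d : ℂ) * (t : ℂ))) t := by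
  have h0 : HasDerivAt (fun t : ℝ => ((t : ℂ))) 1 t := by
    simpa using (hasDerivAt_id t).ofReal_comp
  have h1 : HasDerivAt (fun t : ℝ => (Complex.I * (d : ℂ)) * (t : ℂ)) (Complex.I * (d : ℂ)) t := by
    simpa using h0.const_mul (Complex.I * (d : ℂ))
  have h2 := h1.cexp
  have h3 := h2.const_mul c
  exact h3.congr_deriv (by ring)

lemma iter_deriv_re_expsum {ι : Type*} [Fintype ι] (c : ι → ℂ) (d : ι → ℤ) (ℓ : ℕ) :
    iteratedDeriv ℓ (fun t : ℝ => (∑ i, c i * Complex.exp (Complex.I * (d i : ℂ) * (t : ℂ))).re)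
    = fun t : ℝ => (∑ i, c i * (Complex.I * (d i : ℂ)) ^ ℓ *
        Complex.exp (Complex.I * (d i : ℂ) * (t : ℂ))).re := by
  induction ℓ with
  | zero => simp
  | succ n ih =>
    rw [iteratedDeriv_succ, ih]
    funext t
    have hsum : HasDerivAt (fun t : ℝ => ∑ i, c i * (Complex.I * (d i : ℂ)) ^ n *
        Complex.exp (Complex.I * (d i : ℂ) * (t : ℂ)))
        (∑ i, c i * (Complex.I * (d i : ℂ)) ^ (n+1) *
          Complex.exp (Complex.I * (d i : ℂ) * (t : ℂ))) t := by
      refine HasDerivAt.fun_sum fun i _ => ?_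
      have := hasDerivAt_expterm (c i * (Complex.I * (d i : ℂ)) ^ n) (d i) t
      exact this.congr_deriv (by ring)
    have hre : HasDerivAt (fun t : ℝ => (∑ i, c i * (Complex.I * (d i : ℂ)) ^ n *
        Complex.exp (Complex.I * (d i : ℂ) * (t : ℂ))).re)
        (∑ i, c i * (Complex.I * (d i : ℂ)) ^ (n+1) *
          Complex.exp (Complex.I * (d i : ℂ) * (t : ℂ))).re t := by
      exact (Complex.reCLM.hasFDerivAt.comp_hasDerivAt t hsum)
    exact hre.deriv

lemma sum_exp_root (m : ℕ) (hm : 0 < m) (d : ℤ) (hd : d.natAbs < m) :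
    ∑ r : Fin m, Complex.exp (Complex.I * (d : ℂ) * ((2 * π * r / m : ℝ) : ℂ)) =
    if d = 0 then (m : ℂ) else 0 := by
  rcases eq_or_ne d 0 with h0 | h0
  · subst h0
    simp
  · rw [if_neg h0]
    set z := Complex.exp (Complex.I * (d : ℂ) * ((2 * π / m : ℝ) : ℂ)) with hz
    have hmC : (m : ℂ) ≠ 0 := Nat.cast_ne_zero.2 hm.ne'
    have hterm : ∀ r : Fin m,
        Complex.exp (Complex.I * (d : ℂ) * ((2 * π * r / m : ℝ) : ℂ)) = z ^ (r : ℕ) := by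
      intro r
      rw [hz, ← Complex.exp_nat_mul]
      congr 1
      push_cast
      field_simp
    rw [Finset.sum_congr rfl fun r _ => hterm r]
    have hz1 : z ≠ 1 := by
      intro hzeq
      obtain ⟨n, hn⟩ := Complex.exp_eq_one_iff.1 hzeq
      have key : (Complex.I * 2 * (π : ℂ)) * (d : ℂ) = (Complex.I * 2 * (π : ℂ)) * ((n : ℂ) * m) := by
        have hπ : ((π : ℝ) : ℂ) ≠ 0 := Complex.ofReal_ne_zero.2 Real.pi_ne_zero
        push_cast at hn
        field_simp at hn
        linear_combination (Complex.I * 2 * (π : ℂ)) * hn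
      have hdc : (d : ℂ) = (n : ℂ) * (m : ℂ) :=
        mul_left_cancel₀ (by simp [Real.pi_ne_zero, Complex.I_ne_zero]) key
      have hdz : d = n * (m : ℤ) := by exact_mod_cast hdc
      have hn0 : n ≠ 0 := by rintro rfl; simp at hdz; exact h0 hdz
      have habs : d.natAbs = n.natAbs * m := by
        rw [hdz, Int.natAbs_mul, Int.natAbs_natCast]
      have h1n : 0 < n.natAbs := Int.natAbs_pos.2 hn0
      have : m ≤ n.natAbs * m := Nat.le_mul_of_pos_left m h1n
      omega
    have hsum : ∑ r : Fin m, z ^ (r : ℕ) = (z ^ m - 1) / (z - 1) := by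
      rw [Fin.sum_univ_eq_sum_range (fun r => z ^ r) m, geom_sum_eq hz1]
    rw [hsum]
    have hzm : z ^ m = 1 := by
      rw [hz, ← Complex.exp_nat_mul]
      have : (m : ℂ) * (Complex.I * (d : ℂ) * ((2 * π / m : ℝ) : ℂ)) = (d : ℂ) * (2 * (π : ℂ) * Complex.I) := by
        push_cast
        field_simp
      rw [this]
      exact Complex.exp_int_mul_two_pi_mul_I d
    rw [hzm, sub_self, zero_div]

lemma parseval_split {m s : ℕ} (hs : 1 ≤ s) (hm : s < m) (W : Matrix (Fin m) (Fin s) ℂ)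
    (hW : Wᴴ * W = 1) :
    ∃ v : Fin (m - s) → EuclideanSpace ℂ (Fin m),
      ∀ x : EuclideanSpace ℂ (Fin m),
        ∑ j, ‖(inner ℂ (wcol W j) x : ℂ)‖ ^ 2 + ∑ i, ‖(inner ℂ (v i) x : ℂ)‖ ^ 2 = ‖x‖ ^ 2 := by
  have hw := orthonormal_wcol W hW
  set K : Submodule ℂ (EuclideanSpace ℂ (Fin m)) := Submodule.span ℂ (Set.range (wcol W)) with hKdef
  have hKrank : finrank ℂ K = s := by
    rw [hKdef, finrank_span_eq_card hw.linearIndependent, Fintype.card_fin]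
  have htot : finrank ℂ (EuclideanSpace ℂ (Fin m)) = m := finrank_euclideanSpace_fin
  have hsum := Submodule.finrank_add_finrank_orthogonal K
  have hperp : finrank ℂ Kᗮ = m - s := by omega
  let b : OrthonormalBasis (Fin (m - s)) ℂ Kᗮ :=
    (stdOrthonormalBasis ℂ Kᗮ).reindex (finCongr hperp)
  set v : Fin (m - s) → EuclideanSpace ℂ (Fin m) := fun i => ((b i : Kᗮ) : EuclideanSpace ℂ (Fin m)) with hvdef
  refine ⟨v, fun x => ?_⟩
  set F : Fin s ⊕ Fin (m - s) → EuclideanSpace ℂ (Fin m) := Sum.elim (wcol W) v with hFdef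
  have hmemK : ∀ j, wcol W j ∈ K := fun j => Submodule.subset_span (Set.mem_range_self j)
  have hcross : ∀ (j : Fin s) (i : Fin (m - s)), (inner ℂ (wcol W j) (v i) : ℂ) = 0 := by
    intro j i
    exact ((b i).2 (wcol W j) (hmemK j))
  have hF : Orthonormal ℂ F := by
    rw [orthonormal_iff_ite]
    rintro (j | i) (j' | i')
    · simpa [hFdef] using (orthonormal_iff_ite.1 hw) j j'
    · simpa [hFdef] using hcross j i'
    · simp only [hFdef, Sum.elim_inl, Sum.elim_inr]
      rw [inner_eq_zero_symm.2 (hcross j' i)]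
      simp
    · have := (orthonormal_iff_ite.1 b.orthonormal) i i'
      rw [Submodule.coe_inner] at this
      simp only [hFdef, Sum.elim_inr, hvdef]
      rw [this]
      simp
  haveI : Nonempty (Fin s ⊕ Fin (m - s)) := ⟨Sum.inl ⟨0, hs⟩⟩
  have hcard : Fintype.card (Fin s ⊕ Fin (m - s)) = finrank ℂ (EuclideanSpace ℂ (Fin m)) := by
    simp [htot]; omega
  have hspan : ⊤ ≤ Submodule.span ℂ (Set.range F) :=
    (hF.linearIndependent.span_eq_top_of_card_eq_finrank hcard).ge
  let B : OrthonormalBasis (Fin s ⊕ Fin (m - s)) ℂ (EuclideanSpace ℂ (Fin m)) :=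
    OrthonormalBasis.mk hF hspan
  have hnorm : ‖x‖ ^ 2 = ∑ i : Fin s ⊕ Fin (m - s), ‖(inner ℂ (F i) x : ℂ)‖ ^ 2 := by
    have h1 : ‖x‖ = ‖B.repr x‖ := (B.repr.norm_map x).symm
    rw [h1, norm_sq_eucl (B.repr x)]
    refine Finset.sum_congr rfl fun i _ => ?_
    rw [B.repr_apply_apply]
    congr 2
    rw [show B i = F i from congrFun (OrthonormalBasis.coe_mk hF hspan) i]
  rw [hnorm, Fintype.sum_sum_type]
  simp [hFdef]

lemma deriv_bound_aux {m s : ℕ} (hm : 0 < m) (W : Matrix (Fin m) (Fin s) ℂ) (hW : Wᴴ * W = 1)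
    (t : ℝ) (ℓ : ℕ) (hℓ : 1 ≤ ℓ) :
    ‖∑ p : Option (Fin s × Fin m × Fin m),
        Cf W p * (Complex.I * ((Df (m := m) (s := s) p : ℤ) : ℂ)) ^ ℓ *
          Complex.exp (Complex.I * ((Df (m := m) (s := s) p : ℤ) : ℂ) * (t : ℂ))‖
      ≤ ((m : ℝ) - 1) ^ ℓ := by
  set μ : Fin m → ℝ := fun k => (k : ℝ) - ((m : ℝ) - 1) / 2 with hμ
  set M : ℝ := ((m : ℝ) - 1) / 2 with hM
  have hM0 : 0 ≤ M := by
    rw [hM]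
    have : (1 : ℝ) ≤ m := by exact_mod_cast hm
    linarith
  set A : ℕ → Fin s → ℂ := fun r j => ∑ k, (starRingEnd ℂ) (W k j) *
    ((Complex.I * ((μ k : ℝ) : ℂ)) ^ r * steer m t k) with hA
  set P : ℕ → ℕ → Fin s × Fin m × Fin m → ℂ := fun r s' p =>
    ((starRingEnd ℂ) (W p.2.1 p.1) * ((Complex.I * ((μ p.2.1 : ℝ) : ℂ)) ^ r * steer m t p.2.1)) *
    (starRingEnd ℂ) ((starRingEnd ℂ) (W p.2.2 p.1) * ((Complex.I * ((μ p.2.2 : ℝ) : ℂ)) ^ s' * steer m t p.2.2))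
    with hP
  have claimA : ∀ r s' : ℕ, ∑ p : Fin s × Fin m × Fin m, P r s' p
      = ∑ j, A r j * (starRingEnd ℂ) (A s' j) := by
    intro r s'
    rw [Fintype.sum_prod_type]
    refine Finset.sum_congr rfl fun j _ => ?_
    rw [Fintype.sum_prod_type, hA]
    simp only [map_sum]
    rw [Finset.sum_mul_sum]
  have claimB : ∀ p : Fin s × Fin m × Fin m,
      Cf W (some p) * (Complex.I * ((Df (m := m) (s := s) (some p) : ℤ) : ℂ)) ^ ℓ *
        Complex.exp (Complex.I * ((Df (m := m) (s := s) (some p) : ℤ) : ℂ) * (t : ℂ))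
      = -∑ r ∈ Finset.range (ℓ + 1), ((ℓ.choose r : ℕ) : ℂ) * P r (ℓ - r) p := by
    rintro ⟨j, k, k'⟩
    have hPr : ∀ r s' : ℕ, P r s' (j, k, k') =
        ((Complex.I * ((μ k : ℝ) : ℂ)) ^ r * (-(Complex.I * ((μ k' : ℝ) : ℂ))) ^ s') *
        ((starRingEnd ℂ) (W k j) * W k' j *
          ((m : ℂ)⁻¹ * Complex.exp (Complex.I * (((k : ℤ) - (k' : ℤ) : ℤ) : ℂ) * (t : ℂ)))) := by
      intro r s'
      rw [hP]
      simp only [_root_.map_mul, map_pow, Complex.conj_conj, Complex.conj_I, Complex.conj_ofReal]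
      rw [show ((starRingEnd ℂ) (W k j) * ((Complex.I * ((μ k : ℝ) : ℂ)) ^ r * steer m t k)) *
          (W k' j * ((-Complex.I * ((μ k' : ℝ) : ℂ)) ^ s' * (starRingEnd ℂ) (steer m t k')))
        = ((Complex.I * ((μ k : ℝ) : ℂ)) ^ r * (-(Complex.I * ((μ k' : ℝ) : ℂ))) ^ s') *
          ((starRingEnd ℂ) (W k j) * W k' j * (steer m t k * (starRingEnd ℂ) (steer m t k'))) by ring]
      rw [steer_mul_conj]
    have hsum : ∑ r ∈ Finset.range (ℓ + 1), ((ℓ.choose r : ℕ) : ℂ) * P r (ℓ - r) (j, k, k')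
        = (Complex.I * ((μ k : ℝ) : ℂ) + -(Complex.I * ((μ k' : ℝ) : ℂ))) ^ ℓ *
          ((starRingEnd ℂ) (W k j) * W k' j *
            ((m : ℂ)⁻¹ * Complex.exp (Complex.I * (((k : ℤ) - (k' : ℤ) : ℤ) : ℂ) * (t : ℂ)))) := by
      rw [add_pow, Finset.sum_mul]
      refine Finset.sum_congr rfl fun r _ => ?_
      rw [hPr]
      ring
    rw [hsum]
    have harg : Complex.I * (((k : ℤ) - (k' : ℤ) : ℤ) : ℂ) =
        Complex.I * ((μ k : ℝ) : ℂ) + -(Complex.I * ((μ k' : ℝ) : ℂ)) := by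
      rw [hμ]
      push_cast
      ring
    rw [Cf, Df, ← harg]
    ring
  have hnone : Cf W (none : Option (Fin s × Fin m × Fin m)) *
      (Complex.I * ((Df (m := m) (s := s) none : ℤ) : ℂ)) ^ ℓ *
      Complex.exp (Complex.I * ((Df (m := m) (s := s) none : ℤ) : ℂ) * (t : ℂ)) = 0 := by
    rw [Cf, Df]
    simp [zero_pow (by omega : ℓ ≠ 0)]
  rw [Fintype.sum_option, hnone, zero_add, Finset.sum_congr rfl fun p _ => claimB p,
    Finset.sum_neg_distrib, norm_neg, Finset.sum_comm]
  have hAle : ∀ r : ℕ, ∑ j, ‖A r j‖ ^ 2 ≤ (M ^ r) ^ 2 := by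
    intro r
    have h1 := bessel_col W hW (WithLp.toLp 2 (fun k => (Complex.I * ((μ k : ℝ) : ℂ)) ^ r * steer m t k))
    refine h1.trans ?_
    have hterm : ∀ k : Fin m, ‖(Complex.I * ((μ k : ℝ) : ℂ)) ^ r * steer m t k‖ ^ 2
        ≤ (M ^ r) ^ 2 * (m : ℝ)⁻¹ := by
      intro k
      have habs : |μ k| ≤ M := by
        rw [hμ, hM, abs_le]
        constructor
        · have : (0 : ℝ) ≤ (k : ℝ) := Nat.cast_nonneg _
          simp only
          linarith
        · have hk : (k : ℕ) + 1 ≤ m := k.isLt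
          have : ((k : ℕ) : ℝ) + 1 ≤ (m : ℝ) := by exact_mod_cast hk
          simp only
          linarith
      have hnorm : ‖(Complex.I * ((μ k : ℝ) : ℂ)) ^ r * steer m t k‖
          = |μ k| ^ r * (Real.sqrt m)⁻¹ := by
        rw [norm_mul, norm_pow, norm_mul, Complex.norm_I, one_mul, Complex.norm_real,
          Real.norm_eq_abs, norm_steer hm]
      rw [hnorm, mul_pow]
      have h2 : ((Real.sqrt m)⁻¹) ^ 2 = (m : ℝ)⁻¹ := by
        rw [inv_pow, Real.sq_sqrt (Nat.cast_nonneg m)]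
      rw [h2]
      have h3 : (|μ k| ^ r) ^ 2 ≤ (M ^ r) ^ 2 := by
        have := pow_le_pow_left₀ (abs_nonneg (μ k)) habs r
        exact pow_le_pow_left₀ (pow_nonneg (abs_nonneg _) r) this 2
      exact mul_le_mul_of_nonneg_right h3 (by positivity)
    calc ∑ k, ‖(Complex.I * ((μ k : ℝ) : ℂ)) ^ r * steer m t k‖ ^ 2
        ≤ ∑ _k : Fin m, (M ^ r) ^ 2 * (m : ℝ)⁻¹ := Finset.sum_le_sum fun k _ => hterm k
      _ = (M ^ r) ^ 2 := by
          rw [Finset.sum_const, Finset.card_univ, Fintype.card_fin, nsmul_eq_mul]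
          field_simp
  have hCS : ∀ r s' : ℕ, ∑ j, ‖A r j‖ * ‖A s' j‖ ≤ M ^ r * M ^ s' := by
    intro r s'
    have h2 := Finset.sum_mul_sq_le_sq_mul_sq Finset.univ (fun j => ‖A r j‖) (fun j => ‖A s' j‖)
    have h3 : (∑ j, ‖A r j‖ * ‖A s' j‖) ^ 2 ≤ (M ^ r * M ^ s') ^ 2 := by
      calc (∑ j, ‖A r j‖ * ‖A s' j‖) ^ 2 ≤ (∑ j, ‖A r j‖ ^ 2) * ∑ j, ‖A s' j‖ ^ 2 := h2
        _ ≤ (M ^ r) ^ 2 * (M ^ s') ^ 2 := by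
            refine mul_le_mul (hAle r) (hAle s') (by positivity) (by positivity)
        _ = (M ^ r * M ^ s') ^ 2 := by ring
    exact (pow_le_pow_iff_left₀ (by positivity) (by positivity) two_ne_zero).1 h3
  calc ‖∑ r ∈ Finset.range (ℓ + 1), ∑ p : Fin s × Fin m × Fin m,
        ((ℓ.choose r : ℕ) : ℂ) * P r (ℓ - r) p‖
      ≤ ∑ r ∈ Finset.range (ℓ + 1), ‖∑ p : Fin s × Fin m × Fin m,
          ((ℓ.choose r : ℕ) : ℂ) * P r (ℓ - r) p‖ := norm_sum_le _ _
    _ ≤ ∑ r ∈ Finset.range (ℓ + 1), ((ℓ.choose r : ℕ) : ℝ) * (M ^ r * M ^ (ℓ - r)) := by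
        refine Finset.sum_le_sum fun r _ => ?_
        rw [← Finset.mul_sum, norm_mul, Complex.norm_natCast, claimA]
        refine mul_le_mul_of_nonneg_left ?_ (Nat.cast_nonneg _)
        calc ‖∑ j, A r j * (starRingEnd ℂ) (A (ℓ - r) j)‖
            ≤ ∑ j, ‖A r j * (starRingEnd ℂ) (A (ℓ - r) j)‖ := norm_sum_le _ _
          _ = ∑ j, ‖A r j‖ * ‖A (ℓ - r) j‖ := by
              refine Finset.sum_congr rfl fun j _ => ?_
              rw [norm_mul, RCLike.norm_conj]
          _ ≤ M ^ r * M ^ (ℓ - r) := hCS r (ℓ - r)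
    _ = (M + M) ^ ℓ := by
        rw [add_pow]
        refine Finset.sum_congr rfl fun r _ => ?_
        ring
    _ = ((m : ℝ) - 1) ^ ℓ := by
        rw [hM]
        congr 1
        ring

end LandscapeAux

open LandscapeAux Complex

/-- **Basic properties of landscape functions** (Lemma `lem:landscape1`). -/
theorem landscape_basic_properties (m s : ℕ) (hs : 1 ≤ s) (hm : s < m)
    (W : Matrix (Fin m) (Fin s) ℂ) (hW : Wᴴ * W = 1) :
    (∀ t : ℝ, 0 ≤ landscape W t ∧ landscape W t ≤ 1) ∧
    (landscape W ≠ fun _ => 0) ∧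
    IsTrigPoly (m - 1) (fun t => (landscape W t : ℂ)) ∧
    (∃ (N : ℕ) (g : Fin (m - s) → ℝ → ℂ), (∀ i, IsTrigPoly N (g i)) ∧
      ∀ t : ℝ, landscape W t = ∑ i, ‖g i t‖ ^ 2) ∧
    (∀ (ℓ : ℕ) (t : ℝ), |iteratedDeriv ℓ (landscape W) t| ≤ (m : ℝ) ^ ℓ) := by
  have hm0 : 0 < m := lt_of_le_of_lt (Nat.zero_le s) hm
  -- Part 1
  have part1 : ∀ t : ℝ, 0 ≤ landscape W t ∧ landscape W t ≤ 1 := by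
    intro t
    have hb := bessel_col W hW (WithLp.toLp 2 (fun k => steer m t k))
    have heq : ∑ j, ‖(Wᴴ *ᵥ steer m t) j‖ ^ 2 = ∑ j, ‖∑ k, (starRingEnd ℂ) (W k j) * steer m t k‖ ^ 2 :=
      Finset.sum_congr rfl fun j _ => by rw [mulVec_expand]
    have hle : ∑ j, ‖(Wᴴ *ᵥ steer m t) j‖ ^ 2 ≤ 1 := by
      rw [heq]
      exact hb.trans_eq (sum_norm_sq_steer hm0 t)
    have hge : (0:ℝ) ≤ ∑ j, ‖(Wᴴ *ᵥ steer m t) j‖ ^ 2 := by positivity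
    constructor
    · rw [landscape]; linarith
    · rw [landscape]; linarith
  refine ⟨part1, ?_, ?_, ?_, ?_⟩
  -- Part 2: not identically zero
  · intro h
    have hsum : ∑ r : Fin m, ((landscape W (2 * π * r / m) : ℝ) : ℂ) = (m : ℂ) - s := by
      have h1 : ∀ r : Fin m, ((landscape W (2 * π * r / m) : ℝ) : ℂ) =
          ∑ p : Option (Fin s × Fin m × Fin m),
            Cf W p * Complex.exp (Complex.I * ((Df (m := m) (s := s) p : ℤ) : ℂ) *
              ((2 * π * r / m : ℝ) : ℂ)) := fun r => master W _
      rw [Finset.sum_congr rfl fun r _ => h1 r, Finset.sum_comm]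
      have h2 : ∀ p : Option (Fin s × Fin m × Fin m),
          ∑ r : Fin m, Cf W p * Complex.exp (Complex.I * ((Df (m := m) (s := s) p : ℤ) : ℂ) *
            ((2 * π * r / m : ℝ) : ℂ))
          = Cf W p * (if Df (m := m) (s := s) p = 0 then (m : ℂ) else 0) := by
        intro p
        have hdm : (Df (m := m) (s := s) p).natAbs < m := by
          rcases p with _ | ⟨j, k, k'⟩
          · simpa [Df] using hm0
          · have hk := k.isLt
            have hk' := k'.isLt
            simp only [Df]
            omega
        rw [← Finset.mul_sum, sum_exp_root m hm0 _ hdm]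
      rw [Finset.sum_congr rfl fun p _ => h2 p, Fintype.sum_option]
      have hnone : Cf W (none : Option (Fin s × Fin m × Fin m)) *
          (if Df (m := m) (s := s) (none : Option (Fin s × Fin m × Fin m)) = 0 then (m : ℂ) else 0) = m := by
        simp [Cf, Df]
      rw [hnone, Fintype.sum_prod_type]
      have hsome : ∀ j : Fin s, ∑ y : Fin m × Fin m,
          Cf W (some (j, y)) * (if Df (m := m) (s := s) (some (j, y)) = 0 then (m : ℂ) else 0)
          = -1 := by
        intro j
        rw [Fintype.sum_prod_type]
        have hin : ∀ k : Fin m, ∑ k' : Fin m,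
            Cf W (some (j, k, k')) * (if Df (m := m) (s := s) (some (j, k, k')) = 0 then (m : ℂ) else 0)
            = -(m : ℂ)⁻¹ * ((starRingEnd ℂ) (W k j) * W k j) * m := by
          intro k
          have : ∀ k' : Fin m,
              Cf W (some (j, k, k')) * (if Df (m := m) (s := s) (some (j, k, k')) = 0 then (m : ℂ) else 0)
              = if k' = k then -(m : ℂ)⁻¹ * ((starRingEnd ℂ) (W k j) * W k' j) * m else 0 := by
            intro k'
            simp only [Cf, Df]
            rcases eq_or_ne k' k with hkk | hkk
            · subst hkk; simp
            · have : ¬ ((k : ℤ) - (k' : ℤ) = 0) := by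
                intro hc
                apply hkk
                have : (k' : ℤ) = (k : ℤ) := by omega
                exact Fin.ext (by exact_mod_cast this)
              simp [this, hkk]
          rw [Finset.sum_congr rfl fun k' _ => this k', Finset.sum_ite_eq' _ k, if_pos (Finset.mem_univ k)]
        rw [Finset.sum_congr rfl fun k _ => hin k]
        have hmC : (m : ℂ) ≠ 0 := Nat.cast_ne_zero.2 hm0.ne'
        have hdiag : ∑ k : Fin m, (starRingEnd ℂ) (W k j) * W k j = 1 := by
          have h := congrFun (congrFun hW j) j
          simp only [Matrix.mul_apply, Matrix.conjTranspose_apply, Matrix.one_apply_eq] at h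
          simpa using h
        calc ∑ k : Fin m, -(m : ℂ)⁻¹ * ((starRingEnd ℂ) (W k j) * W k j) * m
            = -(m : ℂ)⁻¹ * m * ∑ k : Fin m, (starRingEnd ℂ) (W k j) * W k j := by
              rw [Finset.mul_sum]
              exact Finset.sum_congr rfl fun k _ => by ring
          _ = -1 := by rw [hdiag, mul_one]; field_simp
      rw [Finset.sum_congr rfl fun j _ => hsome j, Finset.sum_const, Finset.card_univ,
        Fintype.card_fin, nsmul_eq_mul]
      ring
    rw [h] at hsum
    simp only [Complex.ofReal_zero, Finset.sum_const, smul_zero] at hsum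
    have : (m : ℂ) = (s : ℂ) := by linear_combination -hsum
    have : m = s := by exact_mod_cast this
    omega
  -- Part 3: trig poly
  · have hd : ∀ p : Option (Fin s × Fin m × Fin m),
        Df (m := m) (s := s) p ∈ Finset.Icc (-((m - 1 : ℕ) : ℤ)) ((m - 1 : ℕ) : ℤ) := by
      intro p
      rcases p with _ | ⟨j, k, k'⟩
      · simp only [Df, Finset.mem_Icc]
        omega
      · have hk := k.isLt
        have hk' := k'.isLt
        simp only [Df, Finset.mem_Icc]
        omega
    obtain ⟨c, hc⟩ := isTrigPoly_expsum (m - 1) (Cf W) (Df (m := m) (s := s)) hd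
    exact ⟨c, fun t => (master W t).trans (hc t)⟩
  -- Part 4: sum of squares
  · obtain ⟨v, hv⟩ := parseval_split hs hm W hW
    refine ⟨m - 1, fun i => fun t => ∑ k : Fin m,
      ((starRingEnd ℂ) (v i k) * (Real.sqrt m : ℂ)⁻¹) *
        Complex.exp (Complex.I * (((k : ℕ) : ℤ) : ℂ) * (t : ℂ)), fun i => ?_, fun t => ?_⟩
    · refine isTrigPoly_expsum (m - 1) _ (fun k : Fin m => ((k : ℕ) : ℤ)) fun k => ?_
      have hk := k.isLt
      simp only [Finset.mem_Icc]
      omega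
    · -- norm identity
      set x : EuclideanSpace ℂ (Fin m) := WithLp.toLp 2 (fun k => steer m t k) with hx
      have hgi : ∀ i, (∑ k : Fin m, ((starRingEnd ℂ) (v i k) * (Real.sqrt m : ℂ)⁻¹) *
          Complex.exp (Complex.I * (((k : ℕ) : ℤ) : ℂ) * (t : ℂ)))
          = (inner ℂ (v i) x : ℂ) * Complex.exp (Complex.I * ((((m : ℝ) - 1) / 2 * t : ℝ) : ℂ)) := by
        intro i
        rw [PiLp.inner_apply]
        simp only [RCLike.inner_apply']
        rw [Finset.sum_mul]
        refine Finset.sum_congr rfl fun k _ => ?_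
        have hxk : (x k : ℂ) = steer m t k := rfl
        rw [hxk, steer]
        rw [show (starRingEnd ℂ) (v i k) * ((Real.sqrt m : ℂ)⁻¹ *
            Complex.exp (Complex.I * (((((k : ℕ) : ℝ) - ((m : ℝ) - 1) / 2) * t : ℝ) : ℂ))) *
            Complex.exp (Complex.I * ((((m : ℝ) - 1) / 2 * t : ℝ) : ℂ))
          = ((starRingEnd ℂ) (v i k) * (Real.sqrt m : ℂ)⁻¹) *
            (Complex.exp (Complex.I * (((((k : ℕ) : ℝ) - ((m : ℝ) - 1) / 2) * t : ℝ) : ℂ)) *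
             Complex.exp (Complex.I * ((((m : ℝ) - 1) / 2 * t : ℝ) : ℂ))) from by ring]
        rw [← Complex.exp_add]
        congr 2
        push_cast
        ring
      have hnormg : ∀ i, ‖(∑ k : Fin m, ((starRingEnd ℂ) (v i k) * (Real.sqrt m : ℂ)⁻¹) *
          Complex.exp (Complex.I * (((k : ℕ) : ℤ) : ℂ) * (t : ℂ)))‖ = ‖(inner ℂ (v i) x : ℂ)‖ := by
        intro i
        rw [hgi i, norm_mul]
        have : ‖Complex.exp (Complex.I * ((((m : ℝ) - 1) / 2 * t : ℝ) : ℂ))‖ = 1 := by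
          rw [mul_comm, Complex.norm_exp_ofReal_mul_I]
        rw [this, mul_one]
      have hnx : ‖x‖ ^ 2 = 1 := by
        rw [norm_sq_eucl x]
        exact sum_norm_sq_steer hm0 t
      have hinner : ∀ j, (inner ℂ (wcol W j) x : ℂ) = (Wᴴ *ᵥ steer m t) j := by
        intro j
        rw [inner_wcol, mulVec_expand]
      have hpar := hv x
      rw [hnx] at hpar
      rw [landscape]
      have hsumj : ∑ j, ‖(inner ℂ (wcol W j) x : ℂ)‖ ^ 2 = ∑ j, ‖(Wᴴ *ᵥ steer m t) j‖ ^ 2 :=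
        Finset.sum_congr rfl fun j _ => by rw [hinner j]
      rw [hsumj] at hpar
      have : ∑ i, ‖(∑ k : Fin m, ((starRingEnd ℂ) (v i k) * (Real.sqrt m : ℂ)⁻¹) *
          Complex.exp (Complex.I * (((k : ℕ) : ℤ) : ℂ) * (t : ℂ)))‖ ^ 2
          = ∑ i, ‖(inner ℂ (v i) x : ℂ)‖ ^ 2 :=
        Finset.sum_congr rfl fun i _ => by rw [hnormg i]
      rw [this]
      linarith
  -- Part 5: derivative bounds
  · intro ℓ t
    rcases Nat.eq_zero_or_pos ℓ with h0 | hpos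
    · subst h0
      rw [iteratedDeriv_zero, pow_zero]
      have := part1 t
      rw [abs_le]
      constructor <;> linarith [this.1, this.2]
    · have hq : landscape W = fun t : ℝ => (∑ p : Option (Fin s × Fin m × Fin m),
          Cf W p * Complex.exp (Complex.I * ((Df (m := m) (s := s) p : ℤ) : ℂ) * (t : ℂ))).re := by
        funext u
        rw [← master W u, Complex.ofReal_re]
      rw [hq, iter_deriv_re_expsum]
      have hb := deriv_bound_aux hm0 W hW t ℓ hpos
      have habs : |(∑ p : Option (Fin s × Fin m × Fin m),
          Cf W p * (Complex.I * ((Df (m := m) (s := s) p : ℤ) : ℂ)) ^ ℓ *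
            Complex.exp (Complex.I * ((Df (m := m) (s := s) p : ℤ) : ℂ) * (t : ℂ))).re|
          ≤ ((m : ℝ) - 1) ^ ℓ := by
        refine le_trans ?_ hb
        exact Complex.abs_re_le_norm _
      refine habs.trans ?_
      have h1 : (1 : ℝ) ≤ m := by exact_mod_cast hm0
      exact pow_le_pow_left₀ (by linarith) (by linarith) ℓ

end
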